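/- arXiv:1409.2446 — 3 statements merged into one kernel-verified Lean document; each statement's English description precedes it below -/
import Mathlib

section
/- Let t > 0 be real and let r ≥ 1 be an integer. For 0 ≤ ν ≤ r define x_ν = ν√t / √(r² + ν²). Then for every integer ν with 0 ≤ ν ≤ r − 1, one has √t/(2√2 · r) ≤ x_{ν+1} − x_ν ≤ √t / r. -/
/-!
The gap `x_{ν+1} - x_ν` is `√t` times the increment of `f x = x / √(r² + x²)` over a unit
interval inside `[0, r]`. There `f' x = r² / (r² + x²)^{3/2}`, and `r ≤ √(r² + x²) ≤ √2 r`
pins `f'` between `1 / (2√2 r)` and `1 / r`; the mean value theorem does the rest.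
-/

open Real

/-- `x_ν = ν√t / √(r² + ν²)`. -/
noncomputable def critPt (t : ℝ) (r ν : ℕ) : ℝ :=
  (ν : ℝ) * Real.sqrt t / Real.sqrt ((r : ℝ)^2 + (ν : ℝ)^2)

open Set

section
variable {a x y : ℝ}

theorem hasDerivAt_div_sqrt_sq_add_sq (ha : a ≠ 0) (x : ℝ) :
    HasDerivAt (fun y => y / √(a ^ 2 + y ^ 2)) (a ^ 2 / √(a ^ 2 + x ^ 2) ^ 3) x := by
  have hpos : 0 < a ^ 2 + x ^ 2 := by positivity
  have hsqrt : HasDerivAt (fun y => √(a ^ 2 + y ^ 2)) (x / √(a ^ 2 + x ^ 2)) x := by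
    convert ((hasDerivAt_pow 2 x).const_add (a ^ 2)).sqrt hpos.ne' using 1
    ring
  refine ((hasDerivAt_id' x).div hsqrt (sqrt_pos.2 hpos).ne').congr_deriv ?_
  have hsq := sq_sqrt hpos.le
  field_simp
  linear_combination hsq

theorem sqrt_sq_add_sq_mem_Icc (ha : 0 ≤ a) (hx : x ∈ Icc 0 a) :
    √(a ^ 2 + x ^ 2) ∈ Icc a (√2 * a) := by
  constructor
  · exact le_sqrt_of_sq_le (by nlinarith [hx.1])
  · rw [sqrt_le_left (by positivity), mul_pow, sq_sqrt zero_le_two]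
    nlinarith [hx.1, hx.2]

theorem sq_div_sqrt_sq_add_sq_pow_three_mem_Icc (ha : 0 < a) (hx : x ∈ Icc 0 a) :
    a ^ 2 / √(a ^ 2 + x ^ 2) ^ 3 ∈ Icc (1 / (2 * √2 * a)) (1 / a) := by
  obtain ⟨hlo, hhi⟩ := sqrt_sq_add_sq_mem_Icc ha.le hx
  have h2 : √2 ^ 3 = 2 * √2 := by rw [pow_succ, sq_sqrt zero_le_two]
  constructor
  · calc 1 / (2 * √2 * a) = a ^ 2 / (√2 * a) ^ 3 := by
          rw [mul_pow, h2]; field_simp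
      _ ≤ a ^ 2 / √(a ^ 2 + x ^ 2) ^ 3 := by gcongr
  · calc a ^ 2 / √(a ^ 2 + x ^ 2) ^ 3 ≤ a ^ 2 / a ^ 3 := by gcongr
      _ = 1 / a := by field_simp

theorem div_sqrt_sq_add_sq_sub_mem_Icc (ha : 0 < a) (hx : 0 ≤ x) (hxy : x ≤ y) (hy : y ≤ a) :
    y / √(a ^ 2 + y ^ 2) - x / √(a ^ 2 + x ^ 2) ∈
      Icc ((y - x) / (2 * √2 * a)) ((y - x) / a) := by
  set f : ℝ → ℝ := fun y => y / √(a ^ 2 + y ^ 2)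
  have hf := hasDerivAt_div_sqrt_sq_add_sq ha.ne'
  have hcont : ContinuousOn f (Icc 0 a) := fun z _ => (hf z).continuousAt.continuousWithinAt
  have hdiff : DifferentiableOn ℝ f (interior (Icc 0 a)) :=
    fun z _ => (hf z).differentiableAt.differentiableWithinAt
  have hderiv : ∀ z ∈ interior (Icc 0 a), deriv f z ∈ Icc (1 / (2 * √2 * a)) (1 / a) :=
    fun z hz => (hf z).deriv ▸ sq_div_sqrt_sq_add_sq_pow_three_mem_Icc ha (interior_subset hz)
  have hxI : x ∈ Icc 0 a := ⟨hx, hxy.trans hy⟩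
  have hyI : y ∈ Icc 0 a := ⟨hx.trans hxy, hy⟩
  constructor
  · simpa only [one_div_mul_eq_div] using (convex_Icc 0 a).mul_sub_le_image_sub_of_le_deriv
      hcont hdiff (fun z hz => (hderiv z hz).1) x hxI y hyI hxy
  · simpa only [one_div_mul_eq_div] using (convex_Icc 0 a).image_sub_le_mul_sub_of_deriv_le
      hcont hdiff (fun z hz => (hderiv z hz).2) x hxI y hyI hxy

end

theorem critPt_eq_sqrt_mul (t : ℝ) (r ν : ℕ) :
    critPt t r ν = √t * ((ν : ℝ) / √((r : ℝ) ^ 2 + (ν : ℝ) ^ 2)) := by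
  rw [critPt, mul_div_right_comm, mul_comm]

theorem critPt_gaps_general (t : ℝ) (r : ℕ) (hr : 1 ≤ r) :
    ∀ ν : ℕ, ν ≤ r - 1 →
      Real.sqrt t / (2 * Real.sqrt 2 * (r : ℝ)) ≤ critPt t r (ν + 1) - critPt t r ν ∧
        critPt t r (ν + 1) - critPt t r ν ≤ Real.sqrt t / (r : ℝ) := by
  intro ν hν
  have hr0 : (0 : ℝ) < r := by exact_mod_cast hr
  have hνr : (ν : ℝ) + 1 ≤ r := by exact_mod_cast (by omega : ν + 1 ≤ r)
  obtain ⟨hlo, hhi⟩ :=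
    div_sqrt_sq_add_sq_sub_mem_Icc hr0 ν.cast_nonneg (le_add_of_nonneg_right zero_le_one) hνr
  simp only [add_sub_cancel_left] at hlo hhi
  rw [critPt_eq_sqrt_mul, critPt_eq_sqrt_mul, ← mul_sub, Nat.cast_succ]
  constructor
  · simpa only [mul_one_div] using mul_le_mul_of_nonneg_left hlo (sqrt_nonneg t)
  · simpa only [mul_one_div] using mul_le_mul_of_nonneg_left hhi (sqrt_nonneg t)

theorem critPt_gaps (t : ℝ) (ht : 0 < t) (r : ℕ) (hr : 1 ≤ r) :
    ∀ ν : ℕ, ν ≤ r - 1 →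
      Real.sqrt t / (2 * Real.sqrt 2 * (r : ℝ)) ≤ critPt t r (ν + 1) - critPt t r ν ∧
        critPt t r (ν + 1) - critPt t r ν ≤ Real.sqrt t / (r : ℝ) :=
  critPt_gaps_general t r hr
end

section
/- There exists a constant C > 0 such that the following holds. Let t ≥ 2 be real and let r be an integer with 1 ≤ r ≤ √t / 2. For 1 ≤ ν ≤ r define x_ν = ν√t / √(r² + ν²), y_ν = r√t / √(r² + ν²), m_ν = ⌊ν x_ν⌋ / ν (the largest rational number with denominator ν that is at most x_ν), n_ν = √(t − m_ν²), and λ_ν = x_ν − m_ν. Then for every integer ν with 1 ≤ ν ≤ r, | n_ν − y_ν − (ν/r)·λ_ν | ≤ C / (√t · ν²). -/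
open Real

/-- `y_ν = r√t / √(r² + ν²)`. -/
noncomputable def critVal (t : ℝ) (r ν : ℕ) : ℝ :=
  (r : ℝ) * Real.sqrt t / Real.sqrt ((r : ℝ)^2 + (ν : ℝ)^2)

/-- `m_ν = ⌊ν x_ν⌋ / ν`, the largest rational with denominator `ν` that is at most `x_ν`. -/
noncomputable def ratPt (t : ℝ) (r ν : ℕ) : ℝ :=
  (⌊(ν : ℝ) * critPt t r ν⌋ : ℝ) / (ν : ℝ)

/-- `n_ν = √(t − m_ν²)`. -/
noncomputable def ratVal (t : ℝ) (r ν : ℕ) : ℝ :=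
  Real.sqrt (t - (ratPt t r ν)^2)

/-- `λ_ν = x_ν − m_ν`. -/
noncomputable def critDiff (t : ℝ) (r ν : ℕ) : ℝ :=
  critPt t r ν - ratPt t r ν


/-! Write `(x, y) = (x_ν, y_ν)` and `(m, n) = (m_ν, n_ν)`: both lie on the circle of radius `√t`, and
`x / y = ν / r`, so the quantity to bound is the error `n - y - (x / y)(x - m)` of the tangent line at
`(x, y)`. Since `x² + y² = m² + n²`, multiplying that error by `y` gives exactly
`-((x - m)² + (n - y)²) / 2`, and `n - y ≤ (x / y)(x - m)`, so the error is at most `λ² t / (2 y³)`.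
Finally `λ ν = fract (ν x) < 1`, and `ν ≤ r` gives `y² ≥ t / 2`. -/

theorem abs_sub_sub_div_mul_sub_le_of_sq_add_sq_eq {x y m n : ℝ}
    (h : x ^ 2 + y ^ 2 = m ^ 2 + n ^ 2) (hy : 0 < y) (hn : 0 ≤ n) (hm : 0 ≤ m) (hmx : m ≤ x) :
    |n - y - x / y * (x - m)| ≤ (x - m) ^ 2 * (x ^ 2 + y ^ 2) / (2 * y ^ 3) := by
  have hyn : y ≤ n := by nlinarith
  have hchord : n - y - x / y * (x - m) = -((x - m) ^ 2 + (n - y) ^ 2) / (2 * y) := by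
    field_simp
    linear_combination (-1 : ℝ) * h
  have hrise : (n - y) * y ≤ (x - m) * x := by nlinarith
  rw [hchord, abs_div, abs_neg, abs_of_nonneg (by positivity), abs_of_pos (by positivity),
    div_le_div_iff₀ (by positivity) (by positivity)]
  have hrise_sq : ((n - y) * y) ^ 2 ≤ ((x - m) * x) ^ 2 :=
    pow_le_pow_left₀ (mul_nonneg (by linarith) hy.le) hrise 2
  nlinarith

section

variable {t : ℝ} {r ν : ℕ}

theorem critPt_nonneg : 0 ≤ critPt t r ν := by
  unfold critPt; positivity

theorem critVal_pos (ht : 0 < t) (hr : 0 < r) : 0 < critVal t r ν := by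
  unfold critVal; positivity

theorem critPt_sq_add_critVal_sq (ht : 0 ≤ t) (hr : 0 < r) :
    critPt t r ν ^ 2 + critVal t r ν ^ 2 = t := by
  have hw : 0 < (r : ℝ) ^ 2 + (ν : ℝ) ^ 2 := by positivity
  rw [critPt, critVal, div_pow, div_pow, mul_pow, mul_pow, sq_sqrt ht, sq_sqrt hw.le]
  field_simp
  ring

theorem div_eq_critPt_div_critVal (ht : 0 < t) (hr : 0 < r) :
    (ν : ℝ) / r = critPt t r ν / critVal t r ν := by
  have hw : 0 < √((r : ℝ) ^ 2 + (ν : ℝ) ^ 2) := by positivity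
  rw [critPt, critVal]
  field_simp

theorem le_two_mul_critVal_sq (ht : 0 ≤ t) (hr : 0 < r) (hνr : ν ≤ r) :
    t ≤ 2 * critVal t r ν ^ 2 := by
  have hνr' : (ν : ℝ) ≤ r := by exact_mod_cast hνr
  have hw : 0 < (r : ℝ) ^ 2 + (ν : ℝ) ^ 2 := by positivity
  rw [critVal, div_pow, mul_pow, sq_sqrt ht, sq_sqrt hw.le, ← mul_div_assoc,
    le_div_iff₀ hw]
  nlinarith [mul_le_mul hνr' hνr' (Nat.cast_nonneg ν) (Nat.cast_nonneg r)]

theorem critDiff_eq_fract_div (hν : 0 < ν) :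
    critDiff t r ν = Int.fract ((ν : ℝ) * critPt t r ν) / ν := by
  have hν' : (ν : ℝ) ≠ 0 := by positivity
  rw [critDiff, ratPt, Int.fract]
  field_simp

theorem ratPt_nonneg : 0 ≤ ratPt t r ν := by
  unfold ratPt
  have := critPt_nonneg (t := t) (r := r) (ν := ν)
  positivity

theorem ratPt_le_critPt (hν : 0 < ν) : ratPt t r ν ≤ critPt t r ν := by
  rw [← sub_nonneg, ← critDiff, critDiff_eq_fract_div hν]
  positivity

theorem ratPt_sq_add_ratVal_sq (ht : 0 ≤ t) (hr : 0 < r) (hν : 0 < ν) :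
    ratPt t r ν ^ 2 + ratVal t r ν ^ 2 = t := by
  have hm2 : ratPt t r ν ^ 2 ≤ critPt t r ν ^ 2 :=
    pow_le_pow_left₀ ratPt_nonneg (ratPt_le_critPt hν) 2
  have hx := critPt_sq_add_critVal_sq (ν := ν) ht hr
  rw [ratVal, sq_sqrt (by nlinarith)]
  ring

end

theorem ratVal_approx :
    ∃ C : ℝ, 0 < C ∧ ∀ t : ℝ, 2 ≤ t → ∀ r : ℕ, 1 ≤ r → (r : ℝ) ≤ Real.sqrt t / 2 →
      ∀ ν : ℕ, 1 ≤ ν → ν ≤ r →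
        |ratVal t r ν - critVal t r ν - ((ν : ℝ) / (r : ℝ)) * critDiff t r ν|
          ≤ C / (Real.sqrt t * (ν : ℝ)^2) := by
  refine ⟨2, two_pos, fun t ht r hr _ ν hν hνr => ?_⟩
  have ht0 : 0 < t := by linarith
  set y := critVal t r ν
  have hy : 0 < y := critVal_pos ht0 hr
  have hfract := critDiff_eq_fract_div (t := t) (r := r) hν
  have hcircle : critPt t r ν ^ 2 + y ^ 2 = ratPt t r ν ^ 2 + ratVal t r ν ^ 2 := by
    rw [critPt_sq_add_critVal_sq ht0.le hr, ratPt_sq_add_ratVal_sq ht0.le hr hν]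
  have htangent := abs_sub_sub_div_mul_sub_le_of_sq_add_sq_eq hcircle hy (sqrt_nonneg _)
    ratPt_nonneg (ratPt_le_critPt hν)
  rw [← critDiff, critPt_sq_add_critVal_sq ht0.le hr, ← div_eq_critPt_div_critVal ht0 hr]
    at htangent
  have hy2 : t ≤ 2 * y ^ 2 := le_two_mul_critVal_sq ht0.le hr hνr
  have hsqrt : √t ≤ 2 * y := sqrt_le_iff.mpr ⟨by positivity, by nlinarith⟩
  have hfract_sq : (critDiff t r ν * ν) ^ 2 ≤ 1 := by
    rw [hfract, div_mul_cancel₀ _ (by positivity)]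
    exact pow_le_one₀ (Int.fract_nonneg _) (Int.fract_lt_one _).le
  refine htangent.trans ?_
  rw [div_le_div_iff₀ (by positivity) (by positivity)]
  have hst : 0 < √t := sqrt_pos.mpr ht0
  calc critDiff t r ν ^ 2 * t * (√t * ν ^ 2) = (critDiff t r ν * ν) ^ 2 * (t * √t) := by ring
    _ ≤ 1 * (2 * y ^ 2 * (2 * y)) := by gcongr
    _ = 2 * (2 * y ^ 3) := by ring
end

section
/- There exists a constant C > 0 such that for all real t ≥ 2 and all integers r with 1 ≤ r ≤ √t / 2, | Σ_{m=0}^{⌊√(t/2)⌋} exp(2πi·r·√(t − m²)) | ≤ C·( t^(1/4)·√r + r ). -/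
/-!
Put `f(x) = -r√(t - x²)`, so that on `[0, √(t/2)]` the derivative `f'` increases from `0` to at
most `r` with `f'' ≥ λ := r/√t`, and let `δ = √λ/2`. Sort the `m` by the integer `k` next to
`f'(m)`: those with `|f'(m) - k| ≤ δ` form a run of at most `2δ/λ + 1` consecutive integers, and
on the remaining ones the increments `f(m+1) - f(m)` lie in `[k + δ, k + 1 - δ]` and increase, so
the Kuzmin–Landau inequality bounds their sum by `O(1/δ)`. Summing over the `r + 1` values of `k`
gives `O(r/√λ + r) = O(t^{1/4}√r + r)`.
-/

open Real Complex
open Finset ComplexConjugate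

noncomputable def e (x : ℝ) : ℂ := Complex.exp (2 * π * I * x)

lemma norm_e (x : ℝ) : ‖e x‖ = 1 := by
  rw [e, show 2 * π * I * (x : ℂ) = ((2 * π * x : ℝ) : ℂ) * I by push_cast; ring]
  exact norm_exp_ofReal_mul_I _

lemma e_add (x y : ℝ) : e (x + y) = e x * e y := by
  rw [e, e, e, ← Complex.exp_add]; push_cast; ring_nf

lemma e_intCast (k : ℤ) : e k = 1 := by
  rw [e, show 2 * π * I * ((k : ℝ) : ℂ) = k * (2 * π * I) by push_cast; ring]
  exact Complex.exp_int_mul_two_pi_mul_I k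

lemma e_add_intCast (x : ℝ) (k : ℤ) : e (x + k) = e x := by
  rw [e_add, e_intCast, mul_one]

lemma e_neg (x : ℝ) : e (-x) = conj (e x) := by
  simp only [e, ← Complex.exp_conj, map_mul, Complex.conj_ofReal, Complex.conj_I, map_ofNat]
  push_cast; ring_nf

lemma e_sub_one_mul_cot {x : ℝ} (hx : Real.sin (π * x) ≠ 0) :
    (e x - 1) * (-1 / 2 - I / 2 * Real.cot (π * x)) = 1 := by
  have hsq : e x = (Real.cos (π * x) + Real.sin (π * x) * I) ^ 2 := by
    rw [e, Complex.ofReal_cos, Complex.ofReal_sin, ← Complex.exp_mul_I, ← Complex.exp_nat_mul]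
    push_cast; ring_nf
  have hpyth : (Real.cos (π * x) : ℂ) ^ 2 + (Real.sin (π * x) : ℂ) ^ 2 = 1 := by
    exact_mod_cast Real.cos_sq_add_sin_sq (π * x)
  rw [hsq, Real.cot_eq_cos_div_sin, Complex.ofReal_div]
  set c : ℂ := (Real.cos (π * x) : ℂ)
  set s : ℂ := (Real.sin (π * x) : ℂ)
  have hs : s ≠ 0 := Complex.ofReal_ne_zero.mpr hx
  field_simp
  linear_combination (s - c * I) * hpyth + (-c * s ^ 2 * I - 2 * c ^ 2 * s - s ^ 3) * I_sq

lemma two_mul_le_sin_pi_mul {δ x : ℝ} (hδ : 0 ≤ δ) (h₁ : δ ≤ x) (h₂ : x ≤ 1 - δ) :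
    2 * δ ≤ Real.sin (π * x) := by
  wlog hx : x ≤ 1 / 2 generalizing x
  · simpa [mul_sub, Real.sin_pi_sub] using
      this (x := 1 - x) (by linarith) (by linarith) (by linarith)
  have hx0 : 0 ≤ x := hδ.trans h₁
  calc 2 * δ ≤ 2 * x := by linarith
    _ = 2 / π * (π * x) := by field_simp
    _ ≤ Real.sin (π * x) := Real.mul_le_sin (by positivity) (by nlinarith [pi_pos])

lemma cot_antitoneOn : AntitoneOn Real.cot (Set.Ioo 0 π) := by
  intro x hx y hy hxy
  have hsx := Real.sin_pos_of_pos_of_lt_pi hx.1 hx.2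
  have hsy := Real.sin_pos_of_pos_of_lt_pi hy.1 hy.2
  have hsub : 0 ≤ Real.sin (y - x) :=
    Real.sin_nonneg_of_nonneg_of_le_pi (by linarith) (by linarith [hx.1, hy.2])
  rw [Real.sin_sub] at hsub
  rw [Real.cot_eq_cos_div_sin, Real.cot_eq_cos_div_sin, div_le_div_iff₀ hsy hsx]
  linarith

lemma abs_cot_pi_mul_le {δ x : ℝ} (hδ : 0 < δ) (h₁ : δ ≤ x) (h₂ : x ≤ 1 - δ) :
    |Real.cot (π * x)| ≤ 1 / (2 * δ) := by
  have hs := two_mul_le_sin_pi_mul hδ.le h₁ h₂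
  rw [Real.cot_eq_cos_div_sin, abs_div, abs_of_pos (a := Real.sin (π * x)) (by linarith),
    div_le_div_iff₀ (by linarith) (by positivity)]
  nlinarith [Real.abs_cos_le_one (π * x)]

lemma inv_e_sub_one {x : ℝ} (hx : Real.sin (π * x) ≠ 0) :
    (e x - 1)⁻¹ = -1 / 2 - I / 2 * Real.cot (π * x) :=
  inv_eq_of_mul_eq_one_right (e_sub_one_mul_cot hx)

lemma norm_inv_e_sub_one_le {δ x : ℝ} (hδ : 0 < δ) (h₁ : δ ≤ x) (h₂ : x ≤ 1 - δ) :
    ‖(e x - 1)⁻¹‖ ≤ 1 / 2 + 1 / (4 * δ) := by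
  have hsin := (two_mul_le_sin_pi_mul hδ.le h₁ h₂).trans_lt' (show 0 < 2 * δ by linarith)
  rw [inv_e_sub_one hsin.ne']
  calc ‖-1 / 2 - I / 2 * Real.cot (π * x)‖ ≤ ‖(-1 / 2 : ℂ)‖ + ‖I / 2 * Real.cot (π * x)‖ :=
        norm_sub_le _ _
    _ = 1 / 2 + |Real.cot (π * x)| / 2 := by
        rw [norm_mul, Complex.norm_real, Real.norm_eq_abs]
        norm_num
        ring
    _ ≤ 1 / 2 + 1 / (4 * δ) := by
        linarith [abs_cot_pi_mul_le hδ h₁ h₂, show 1 / (2 * δ) / 2 = 1 / (4 * δ) by ring]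

lemma norm_inv_e_sub_one_sub_inv_e_sub_one {δ x y : ℝ} (hδ : 0 < δ) (h₁ : δ ≤ x) (hxy : x ≤ y)
    (h₂ : y ≤ 1 - δ) :
    ‖(e y - 1)⁻¹ - (e x - 1)⁻¹‖ = (Real.cot (π * x) - Real.cot (π * y)) / 2 := by
  have hsin : ∀ z, δ ≤ z → z ≤ 1 - δ → 0 < Real.sin (π * z) := fun z hz₁ hz₂ ↦
    (two_mul_le_sin_pi_mul hδ.le hz₁ hz₂).trans_lt' (show 0 < 2 * δ by linarith)
  have hmem : ∀ z, δ ≤ z → z ≤ 1 - δ → π * z ∈ Set.Ioo 0 π := fun z hz₁ hz₂ ↦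
    ⟨by nlinarith [pi_pos], by nlinarith [pi_pos]⟩
  have hcot : Real.cot (π * y) ≤ Real.cot (π * x) :=
    cot_antitoneOn (hmem x h₁ (by linarith)) (hmem y (by linarith) h₂) (by nlinarith [pi_pos])
  rw [inv_e_sub_one (hsin y (by linarith) h₂).ne', inv_e_sub_one (hsin x h₁ (by linarith)).ne',
    show ∀ a b : ℝ, (-1 / 2 - I / 2 * a) - (-1 / 2 - I / 2 * b) = I / 2 * ((b - a : ℝ) : ℂ) by
      intro a b; push_cast; ring,
    norm_mul, Complex.norm_real, Real.norm_eq_abs, abs_of_nonneg (sub_nonneg.mpr hcot)]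
  norm_num
  ring

theorem norm_sum_smul_le_of_norm_partialSum_le {𝕜 E : Type*} [SeminormedRing 𝕜]
    [SeminormedAddCommGroup E] [Module 𝕜 E] [IsBoundedSMul 𝕜 E] (f : ℕ → 𝕜) (g : ℕ → E)
    (n : ℕ) {B : ℝ} (hB : ∀ k ≤ n, ‖∑ i ∈ range k, g i‖ ≤ B) :
    ‖∑ i ∈ range n, f i • g i‖ ≤
      B * (‖f (n - 1)‖ + ∑ i ∈ range (n - 1), ‖f (i + 1) - f i‖) := by
  have hB0 : 0 ≤ B := (norm_nonneg _).trans (hB 0 (Nat.zero_le n))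
  rw [sum_range_by_parts, mul_add, mul_sum]
  refine (norm_sub_le _ _).trans (add_le_add ?_ ((norm_sum_le _ _).trans (sum_le_sum ?_)))
  · exact (norm_smul_le _ _).trans (by rw [mul_comm]; gcongr; exact hB n le_rfl)
  · intro i hi
    rw [mem_range] at hi
    exact (norm_smul_le _ _).trans (by rw [mul_comm]; gcongr; exact hB _ (by omega))

/-- The Kuzmin–Landau inequality. Since `e (v j) = (e (v (j + 1)) - e (v j)) / (e ψⱼ - 1)` with
`ψⱼ = v (j + 1) - v j - k`, summation by parts leaves the weights `(e ψⱼ - 1)⁻¹`, whose imaginary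
parts `-cot (π ψⱼ) / 2` are monotone in `j` and bounded by `1 / (4δ)`. -/
theorem norm_sum_e_le_of_monotoneOn_sub {v : ℕ → ℝ} {N : ℕ} {k : ℤ} {δ : ℝ} (hδ : 0 < δ)
    (hdiff : ∀ j < N, v (j + 1) - v j ∈ Set.Icc (k + δ) (k + 1 - δ))
    (hmono : MonotoneOn (fun j ↦ v (j + 1) - v j) (Set.Iio N)) :
    ‖∑ j ∈ range (N + 1), e (v j)‖ ≤ 2 + 3 / (2 * δ) := by
  obtain _ | n := N
  · simp only [zero_add, range_one, sum_singleton, norm_e]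
    linarith [show 0 < 3 / (2 * δ) by positivity]
  set ψ : ℕ → ℝ := fun j ↦ v (j + 1) - v j - k
  set c : ℕ → ℝ := fun j ↦ Real.cot (π * ψ j)
  set w : ℕ → ℂ := fun j ↦ (e (ψ j) - 1)⁻¹
  set E : ℕ → ℂ := fun j ↦ e (v j)
  have hψ : ∀ j < n + 1, δ ≤ ψ j ∧ ψ j ≤ 1 - δ := fun j hj ↦ by
    obtain ⟨h₁, h₂⟩ := hdiff j hj
    constructor <;> simp only [ψ] <;> linarith
  have hψ_mono : ∀ i < n, ψ i ≤ ψ (i + 1) := fun i hi ↦ by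
    have := hmono (a := i) (b := i + 1) (Set.mem_Iio.mpr (by omega)) (Set.mem_Iio.mpr (by omega)) (by omega)
    simp only [ψ]
    linarith
  have hE : ∀ j < n + 1, E j = w j • (E (j + 1) - E j) := fun j hj ↦ by
    have hsin := (two_mul_le_sin_pi_mul hδ.le (hψ j hj).1 (hψ j hj).2).trans_lt'
      (show 0 < 2 * δ by linarith)
    have hv : v (j + 1) = v j + ψ j + k := by simp only [ψ]; ring
    rw [smul_eq_mul, show E (j + 1) - E j = E j * (e (ψ j) - 1) by
      simp only [E]; rw [hv, e_add_intCast, e_add]; ring]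
    simp only [w]
    rw [mul_left_comm, inv_mul_cancel₀ (left_ne_zero_of_mul_eq_one (e_sub_one_mul_cot hsin.ne')),
      mul_one]
  have hpartial : ∀ m ≤ n + 1, ‖∑ i ∈ range m, (E (i + 1) - E i)‖ ≤ 2 := fun m _ ↦ by
    rw [sum_range_sub]
    exact (norm_sub_le _ _).trans (by simp only [E, norm_e]; norm_num)
  have habel := norm_sum_smul_le_of_norm_partialSum_le w _ (n + 1) hpartial
  simp only [add_tsub_cancel_right] at habel
  rw [sum_congr rfl fun i hi ↦ norm_inv_e_sub_one_sub_inv_e_sub_one hδ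
      (hψ i (Nat.lt_succ_of_lt (mem_range.mp hi))).1 (hψ_mono i (mem_range.mp hi))
      (hψ (i + 1) (Nat.succ_lt_succ (mem_range.mp hi))).2, ← sum_div, sum_range_sub' c] at habel
  rw [sum_range_succ, sum_congr rfl fun j hj ↦ hE j (mem_range.mp hj)]
  have hcn := abs_le.mp (abs_cot_pi_mul_le hδ (hψ n (by omega)).1 (hψ n (by omega)).2)
  have hc0 := abs_le.mp (abs_cot_pi_mul_le hδ (hψ 0 (by omega)).1 (hψ 0 (by omega)).2)
  calc ‖∑ j ∈ range (n + 1), w j • (E (j + 1) - E j) + E (n + 1)‖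
      ≤ 2 * (‖w n‖ + (c 0 - c n) / 2) + 1 := by
        refine (norm_add_le _ _).trans (add_le_add habel ?_)
        simp [E, norm_e]
    _ ≤ 2 * (1 / 2 + 1 / (4 * δ) + 1 / (2 * δ)) + 1 := by
        linarith [norm_inv_e_sub_one_le hδ (hψ n (by omega)).1 (hψ n (by omega)).2, hcn.1, hc0.2]
    _ = 2 + 3 / (2 * δ) := by field_simp; ring

theorem Finset.card_le_of_forall_sub_le {S : Finset ℕ} {D : ℝ} (hD : 0 ≤ D)
    (h : ∀ p ∈ S, ∀ q ∈ S, p ≤ q → (q : ℝ) - p ≤ D) : (#S : ℝ) ≤ D + 1 := by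
  rcases S.eq_empty_or_nonempty with rfl | hS
  · rw [card_empty, Nat.cast_zero]; linarith
  set a := S.min' hS
  have hsub : S ⊆ Icc a (a + ⌊D⌋₊) := fun q hq ↦ by
    have haq : a ≤ q := S.min'_le q hq
    have : ((q - a : ℕ) : ℝ) ≤ D := by
      rw [Nat.cast_sub haq]; exact h a (S.min'_mem hS) q hq haq
    have := Nat.le_floor this
    exact mem_Icc.mpr ⟨haq, by omega⟩
  have hcard : #S ≤ ⌊D⌋₊ + 1 := by
    have := card_le_card hsub
    rw [Nat.card_Icc] at this
    omega
  calc (#S : ℝ) ≤ (⌊D⌋₊ : ℝ) + 1 := by exact_mod_cast hcard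
    _ ≤ D + 1 := by linarith [Nat.floor_le hD]

theorem Finset.eq_Icc_min'_max' {α : Type*} [LinearOrder α] [LocallyFiniteOrder α] {S : Finset α}
    (hS : S.Nonempty) (hconn : (S : Set α).OrdConnected) : S = Icc (S.min' hS) (S.max' hS) := by
  ext m
  refine ⟨fun hm ↦ mem_Icc.mpr ⟨S.min'_le m hm, S.le_max' m hm⟩, fun hm ↦ ?_⟩
  exact hconn.out (S.min'_mem hS) (S.max'_mem hS) (mem_Icc.mp hm)

lemma sub_mem_Icc_of_hasDerivAt_of_monotoneOn {f f' : ℝ → ℝ} {x : ℝ}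
    (hf : ∀ y ∈ Set.Icc x (x + 1), HasDerivAt f (f' y) y)
    (hmono : MonotoneOn f' (Set.Icc x (x + 1))) :
    f (x + 1) - f x ∈ Set.Icc (f' x) (f' (x + 1)) := by
  obtain ⟨c, hc, hslope⟩ := exists_hasDerivAt_eq_slope f f' (lt_add_one x)
    (fun y hy ↦ (hf y hy).continuousAt.continuousWithinAt)
    (fun y hy ↦ hf y (Set.Ioo_subset_Icc_self hy))
  rw [add_sub_cancel_left, div_one] at hslope
  rw [← hslope]
  have hc' := Set.Ioo_subset_Icc_self hc
  exact ⟨hmono (Set.left_mem_Icc.mpr (by linarith)) hc' hc.1.le,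
    hmono hc' (Set.right_mem_Icc.mpr (by linarith)) hc.2.le⟩

section SecondDerivativeTest

variable {f f' : ℝ → ℝ} {M : ℕ} {lam δ : ℝ}

lemma monotoneOn_of_deriv_growth (hlam : 0 ≤ lam)
    (hgrowth : ∀ x y : ℝ, 0 ≤ x → x ≤ y → y ≤ M → lam * (y - x) ≤ f' y - f' x) :
    MonotoneOn f' (Set.Icc 0 M) := fun x hx y hy hxy ↦ by
  nlinarith [hgrowth x y hx.1 hxy hy.2, mul_nonneg hlam (sub_nonneg.mpr hxy)]

lemma card_le_of_deriv_growth {c : ℝ} {S : Finset ℕ} (hlam : 0 < lam) (hδ : 0 ≤ δ)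
    (hgrowth : ∀ x y : ℝ, 0 ≤ x → x ≤ y → y ≤ M → lam * (y - x) ≤ f' y - f' x)
    (hS : ∀ m ∈ S, m ≤ M ∧ f' m ∈ Set.Icc (c - δ) (c + δ)) :
    (#S : ℝ) ≤ 2 * δ / lam + 1 :=
  card_le_of_forall_sub_le (by positivity) fun p hp q hq hpq ↦ by
    obtain ⟨hqM, hq⟩ := hS q hq
    have hp := (hS p hp).2
    have := hgrowth p q (Nat.cast_nonneg p) (by exact_mod_cast hpq) (by exact_mod_cast hqM)
    rw [le_div_iff₀ hlam]
    linarith [hq.2, hp.1]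

lemma natCast_add_one_sub_mem_Icc {m : ℕ} (hm : m < M)
    (hf : ∀ x ∈ Set.Icc (0 : ℝ) M, HasDerivAt f (f' x) x) (hmono : MonotoneOn f' (Set.Icc 0 M)) :
    f (m + 1 : ℕ) - f m ∈ Set.Icc (f' m) (f' (m + 1 : ℕ)) := by
  have hsub : Set.Icc (m : ℝ) (m + 1) ⊆ Set.Icc 0 M :=
    Set.Icc_subset_Icc (Nat.cast_nonneg m) (by exact_mod_cast hm)
  push_cast
  exact sub_mem_Icc_of_hasDerivAt_of_monotoneOn (fun y hy ↦ hf y (hsub hy)) (hmono.mono hsub)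

lemma norm_sum_e_le_of_deriv_mem_Icc {k : ℤ} {S : Finset ℕ} (hδ : 0 < δ)
    (hf : ∀ x ∈ Set.Icc (0 : ℝ) M, HasDerivAt f (f' x) x) (hmono : MonotoneOn f' (Set.Icc 0 M))
    (hS : ∀ m ∈ S, m ≤ M ∧ f' m ∈ Set.Icc (k + δ) (k + 1 - δ))
    (hconn : (S : Set ℕ).OrdConnected) :
    ‖∑ m ∈ S, e (f m)‖ ≤ 2 + 3 / (2 * δ) := by
  rcases S.eq_empty_or_nonempty with rfl | hne
  · simp only [sum_empty, norm_zero]; positivity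
  set a := S.min' hne
  set b := S.max' hne
  have hab : a ≤ b := S.min'_le b (S.max'_mem hne)
  have hbM : b ≤ M := (hS b (S.max'_mem hne)).1
  have hmem : ∀ j ≤ b - a, a + j ∈ S := fun j hj ↦
    hconn.out (S.min'_mem hne) (S.max'_mem hne) ⟨by omega, by omega⟩
  have hstep : ∀ j < b - a, f (a + (j + 1) : ℕ) - f (a + j : ℕ) ∈
      Set.Icc (f' (a + j : ℕ)) (f' (a + (j + 1) : ℕ)) :=
    fun j hj ↦ natCast_add_one_sub_mem_Icc (by omega) hf hmono
  rw [eq_Icc_min'_max' hne hconn, ← Ico_add_one_right_eq_Icc, sum_Ico_eq_sum_range,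
    show b + 1 - a = b - a + 1 by omega]
  have hmonoN : ∀ p q : ℕ, p ≤ q → q ≤ M → f' p ≤ f' q := fun p q hpq hqM ↦
    hmono ⟨p.cast_nonneg, by exact_mod_cast hpq.trans hqM⟩ ⟨q.cast_nonneg, by exact_mod_cast hqM⟩
      (by exact_mod_cast hpq)
  refine norm_sum_e_le_of_monotoneOn_sub (k := k) hδ (fun j hj ↦ ?_) (fun i hi j hj hij ↦ ?_)
  · exact ⟨(hS _ (hmem j hj.le)).2.1.trans (hstep j hj).1,
      (hstep j hj).2.trans (hS _ (hmem (j + 1) hj)).2.2⟩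
  · rw [Set.mem_Iio] at hi hj
    rcases hij.eq_or_lt with rfl | hij
    · exact le_rfl
    · exact (hstep i (hij.trans hj)).2.trans <|
        (hmonoN _ _ (by omega) (by omega)).trans (hstep j hj).1

lemma norm_sum_fiber_le (k : ℕ) (hlam : 0 < lam) (hδ : 0 < δ)
    (hf : ∀ x ∈ Set.Icc (0 : ℝ) M, HasDerivAt f (f' x) x)
    (hgrowth : ∀ x y : ℝ, 0 ≤ x → x ≤ y → y ≤ M → lam * (y - x) ≤ f' y - f' x) (hf'0 : 0 ≤ f' 0) :
    ‖∑ m ∈ range (M + 1) with ⌊f' (m : ℕ) + δ⌋₊ = k, e (f m)‖ ≤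
      2 * δ / lam + 1 + (2 + 3 / (2 * δ)) := by
  have hmono := monotoneOn_of_deriv_growth hlam.le hgrowth
  have hnonneg : ∀ m : ℕ, m ≤ M → 0 ≤ f' m + δ := fun m hm ↦ by
    have := hmono ⟨le_rfl, M.cast_nonneg⟩ ⟨m.cast_nonneg, by exact_mod_cast hm⟩ m.cast_nonneg
    linarith
  have hfiber : ∀ m, m ∈ range (M + 1) ∧ ⌊f' m + δ⌋₊ = k ↔
      m ≤ M ∧ (k : ℝ) ≤ f' m + δ ∧ f' m + δ < k + 1 := fun m ↦ by
    rw [mem_range, Nat.lt_add_one_iff]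
    refine and_congr_right fun hm ↦ Nat.floor_eq_iff (hnonneg m hm)
  rw [← sum_filter_add_sum_filter_not _ (fun m : ℕ ↦ f' m < k + δ)]
  refine (norm_add_le _ _).trans (add_le_add ?_ ?_)
  · refine (norm_sum_le _ _).trans ?_
    simp only [norm_e, sum_const, nsmul_eq_mul, mul_one]
    refine card_le_of_deriv_growth (c := k) hlam hδ.le hgrowth fun m hm ↦ ?_
    simp only [mem_filter] at hm
    obtain ⟨hmM, hk, -⟩ := (hfiber m).mp hm.1
    exact ⟨hmM, by linarith, by linarith [hm.2]⟩
  · refine norm_sum_e_le_of_deriv_mem_Icc (k := k) hδ hf hmono (fun m hm ↦ ?_) ⟨?_⟩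
    · simp only [mem_filter, not_lt] at hm
      obtain ⟨hmM, -, hk⟩ := (hfiber m).mp hm.1
      exact ⟨hmM, by push_cast; linarith [hm.2], by push_cast; linarith⟩
    · intro a ha b hb m ⟨ham, hmb⟩
      simp only [mem_coe, mem_filter, not_lt] at ha hb ⊢
      obtain ⟨hbM, -, hbk⟩ := (hfiber b).mp hb.1
      have hmM : m ≤ M := hmb.trans hbM
      have ham' := hmono ⟨a.cast_nonneg, by exact_mod_cast ham.trans hmM⟩
        ⟨m.cast_nonneg, by exact_mod_cast hmM⟩ (by exact_mod_cast ham)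
      have hmb' := hmono ⟨m.cast_nonneg, by exact_mod_cast hmM⟩
        ⟨b.cast_nonneg, by exact_mod_cast hbM⟩ (by exact_mod_cast hmb)
      exact ⟨(hfiber m).mpr ⟨hmM, by linarith [ha.2], by linarith⟩, by linarith [ha.2]⟩

/-- Van der Corput's second-derivative test, with the cut-off `δ = √lam / 2`. -/
theorem norm_sum_e_le_of_deriv_growth {R : ℕ} (hlam : 0 < lam) (hlam1 : lam ≤ 1)
    (hf : ∀ x ∈ Set.Icc (0 : ℝ) M, HasDerivAt f (f' x) x)
    (hgrowth : ∀ x y : ℝ, 0 ≤ x → x ≤ y → y ≤ M → lam * (y - x) ≤ f' y - f' x)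
    (hf'0 : 0 ≤ f' 0) (hf'M : f' M ≤ R) :
    ‖∑ m ∈ range (M + 1), e (f m)‖ ≤ (R + 1) * (4 / √lam + 3) := by
  set δ := √lam / 2
  have hsqrt : 0 < √lam := Real.sqrt_pos.mpr hlam
  have hδ1 : δ < 1 := show √lam / 2 < 1 by linarith [Real.sqrt_le_one.mpr hlam1]
  have hmono := monotoneOn_of_deriv_growth hlam.le hgrowth
  have hmaps : ∀ m ∈ range (M + 1), ⌊f' m + δ⌋₊ ∈ range (R + 1) := fun m hm ↦ by
    have hmM : m ≤ M := Nat.lt_add_one_iff.mp (mem_range.mp hm)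
    have := hmono ⟨m.cast_nonneg, by exact_mod_cast hmM⟩ ⟨M.cast_nonneg, le_rfl⟩
      (by exact_mod_cast hmM)
    rw [mem_range, Nat.floor_lt' R.succ_ne_zero]
    push_cast
    linarith
  rw [← sum_fiberwise_of_maps_to hmaps]
  calc ‖∑ k ∈ range (R + 1), ∑ m ∈ range (M + 1) with ⌊f' (m : ℕ) + δ⌋₊ = k, e (f m)‖
      ≤ ∑ k ∈ range (R + 1), (2 * δ / lam + 1 + (2 + 3 / (2 * δ))) :=
        (norm_sum_le _ _).trans <| sum_le_sum fun k _ ↦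
          norm_sum_fiber_le k hlam (by positivity) hf hgrowth hf'0
    _ = (R + 1) * (4 / √lam + 3) := by
        have hl : lam = √lam ^ 2 := (Real.sq_sqrt hlam.le).symm
        rw [sum_const, card_range, nsmul_eq_mul]
        push_cast
        simp only [δ]
        generalize √lam = s at hsqrt hl
        subst hl
        field_simp
        ring

end SecondDerivativeTest

lemma norm_sum_e_neg {ι : Type*} (s : Finset ι) (a : ι → ℝ) :
    ‖∑ i ∈ s, e (-a i)‖ = ‖∑ i ∈ s, e (a i)‖ := by
  simp only [e_neg, ← map_sum, Complex.norm_conj]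

lemma hasDerivAt_neg_mul_sqrt_sub_sq (r : ℝ) {t x : ℝ} (hx : x ^ 2 < t) :
    HasDerivAt (fun y ↦ -(r * √(t - y ^ 2))) (r * x / √(t - x ^ 2)) x := by
  have hsq : HasDerivAt (fun y ↦ t - y ^ 2) (-(2 * x)) x := by
    simpa using (hasDerivAt_pow 2 x).const_sub t
  refine (((hsq.sqrt (by linarith)).const_mul r).fun_neg).congr_deriv ?_
  ring

lemma mul_sub_le_div_sqrt_sub_sq {r t x y : ℝ} (hr : 0 ≤ r) (hx : 0 ≤ x) (hxy : x ≤ y)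
    (hy : y ^ 2 < t) : r / √t * (y - x) ≤ r * y / √(t - y ^ 2) - r * x / √(t - x ^ 2) := by
  have hxt : x ^ 2 < t := by nlinarith
  have hsy : 0 < √(t - y ^ 2) := Real.sqrt_pos.mpr (by linarith)
  have hsx : 0 < √(t - x ^ 2) := Real.sqrt_pos.mpr (by linarith)
  have hyx : √(t - y ^ 2) ≤ √(t - x ^ 2) := Real.sqrt_le_sqrt (by nlinarith)
  have hxt' : √(t - x ^ 2) ≤ √t := Real.sqrt_le_sqrt (by nlinarith)
  calc r / √t * (y - x) = r * (y - x) / √t := by ring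
    _ ≤ r * (y - x) / √(t - x ^ 2) :=
        div_le_div_of_nonneg_left (mul_nonneg hr (by linarith)) hsx hxt'
    _ = r * y / √(t - x ^ 2) - r * x / √(t - x ^ 2) := by ring
    _ ≤ r * y / √(t - y ^ 2) - r * x / √(t - x ^ 2) := by
        gcongr
        exact mul_nonneg hr (hx.trans hxy)

lemma mul_div_sqrt_sub_sq_le {r t x : ℝ} (hr : 0 ≤ r) (h : 2 * x ^ 2 ≤ t) :
    r * x / √(t - x ^ 2) ≤ r := by
  have hx' : x ≤ √(t - x ^ 2) := Real.le_sqrt_of_sq_le (by linarith)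
  exact div_le_of_le_mul₀ (Real.sqrt_nonneg _) hr (by nlinarith)

lemma add_one_mul_div_sqrt_div_sqrt_le {r t : ℝ} (hr : 1 ≤ r) (ht : 0 ≤ t) :
    (r + 1) * (4 / √(r / √t) + 3) ≤ 8 * (t ^ (1 / 4 : ℝ) * √r + r) := by
  have hq : t ^ (1 / 4 : ℝ) = √(√t) := by
    rw [Real.sqrt_eq_rpow, Real.sqrt_eq_rpow, ← Real.rpow_mul ht]; norm_num
  rw [hq, Real.sqrt_div (by linarith), div_div_eq_mul_div]
  have hs : 1 ≤ √r := Real.one_le_sqrt.mpr hr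
  have hrs : r = √r ^ 2 := (Real.sq_sqrt (by linarith)).symm
  have hq0 : 0 ≤ √(√t) := Real.sqrt_nonneg _
  generalize √r = s at hs hrs
  generalize √(√t) = q at hq0
  subst hrs
  rw [div_add' _ _ _ (by positivity), mul_div_assoc', div_le_iff₀ (by positivity)]
  have hqs := mul_nonneg hq0 (sub_nonneg.mpr hs)
  nlinarith [mul_nonneg hqs (sub_nonneg.mpr hs)]

theorem exp_sum_sqrt_estimate :
    ∃ C : ℝ, 0 < C ∧ ∀ t : ℝ, 2 ≤ t → ∀ r : ℕ, 1 ≤ r → (r : ℝ) ≤ Real.sqrt t / 2 →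
      ‖
          (∑ m ∈ Finset.range (⌊Real.sqrt (t/2)⌋₊ + 1),
            Complex.exp (2 * (Real.pi : ℂ) * Complex.I *
              (((r : ℝ) * Real.sqrt (t - (m : ℝ)^2) : ℝ) : ℂ)))‖
        ≤ C * (t ^ ((1:ℝ)/4) * Real.sqrt (r : ℝ) + (r : ℝ)) := by
  refine ⟨8, by norm_num, fun t ht r hr hrt ↦ ?_⟩
  set M := ⌊√(t / 2)⌋₊
  have hr1 : (1 : ℝ) ≤ r := by exact_mod_cast hr
  have hst : 0 < √t := Real.sqrt_pos.mpr (by linarith)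
  have hM : 2 * (M : ℝ) ^ 2 ≤ t := by
    have := Nat.floor_le (Real.sqrt_nonneg (t / 2))
    have := Real.sq_sqrt (show 0 ≤ t / 2 by linarith)
    nlinarith
  have hlam : 0 < (r : ℝ) / √t := by positivity
  have hlam1 : (r : ℝ) / √t ≤ 1 := by rw [div_le_one hst]; linarith
  have hsq : ∀ x : ℝ, 0 ≤ x → x ≤ M → x ^ 2 < t := fun x hx hxM ↦ by nlinarith
  have key := norm_sum_e_le_of_deriv_growth (f := fun x ↦ -(r * √(t - x ^ 2)))
    (f' := fun x ↦ r * x / √(t - x ^ 2)) (M := M) (R := r) hlam hlam1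
    (fun x hx ↦ hasDerivAt_neg_mul_sqrt_sub_sq r (hsq x hx.1 hx.2))
    (fun x y hx hxy hy ↦ mul_sub_le_div_sqrt_sub_sq r.cast_nonneg hx hxy (hsq y (hx.trans hxy) hy))
    (by simp) (mul_div_sqrt_sub_sq_le r.cast_nonneg hM)
  exact (norm_sum_e_neg (range (M + 1)) fun m : ℕ ↦ (r : ℝ) * √(t - (m : ℝ) ^ 2)).symm.le.trans
    (key.trans (add_one_mul_div_sqrt_div_sqrt_le hr1 (by linarith)))
end
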